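/- For fixed m, the map n ↦ d_{mn} is nonincreasing for n ≤ m, i.e., d_{m,n-1} ≥ d_{mn} for all 0 ≤ n ≤ m. -/

import Mathlib

open Finset

/-- `kmPi α i n` is `π_i^n = α_i ∏_{k=i+1}^n (1 - α_k)` (empty product = 1). -/
noncomputable def kmPi (α : ℕ → ℝ) (i n : ℕ) : ℝ :=
  α i * ∏ k ∈ Finset.Icc (i + 1) n, (1 - α k)
/-- A feasible transport plan between the probability vectors `π^m` and `π^n`. -/
def IsPlan (α : ℕ → ℝ) (m n : ℕ) (z : ℕ → ℕ → ℝ) : Prop :=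
  (∀ i ≤ m, ∀ j ≤ n, 0 ≤ z i j) ∧
  (∀ i ≤ m, ∑ j ∈ Finset.range (n + 1), z i j = kmPi α i m) ∧
  (∀ j ≤ n, ∑ i ∈ Finset.range (m + 1), z i j = kmPi α j n)

/-- Transport cost `Σ_{i=0}^m Σ_{j=0}^n z_{ij} d_{i-1,j-1}`, where indices of `D` are
shifted by one: `D i j` stands for `d_{i-1,j-1}`. -/
noncomputable def planCost (D : ℕ → ℕ → ℝ) (m n : ℕ) (z : ℕ → ℕ → ℝ) : ℝ :=
  ∑ i ∈ Finset.range (m + 1), ∑ j ∈ Finset.range (n + 1), z i j * D i j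

/-- `D : ℕ → ℕ → ℝ` encodes the family `d_{mn}` for `m, n ∈ {-1,0,1,...}` with indices
shifted by one: `D (m+1) (n+1) = d_{m,n}`, `D 0 (k+1) = d_{-1,k}`, etc.  It is the
recursive optimal-transport family: boundary values `d_{-1,-1} = 0`,
`d_{-1,k} = d_{k,-1} = 1`, and `d_{mn}` is the minimum transport cost between
`π^m` and `π^n` (the minimum, i.e. attained greatest lower bound). -/
def IsKMDist (α : ℕ → ℝ) (D : ℕ → ℕ → ℝ) : Prop :=
  D 0 0 = 0 ∧ (∀ k : ℕ, D 0 (k + 1) = 1) ∧ (∀ k : ℕ, D (k + 1) 0 = 1) ∧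
  ∀ m n : ℕ,
    IsLeast {c : ℝ | ∃ z : ℕ → ℕ → ℝ, IsPlan α m n z ∧ c = planCost D m n z}
      (D (m + 1) (n + 1))


/-! By induction on the indices, `d` is a pseudometric on `{-1, 0, 1, …}`; the triangle
inequality comes from gluing two optimal plans along their common marginal. For a pseudometric
cost, mass shared by the two marginals can stay in place: when `n < m` we have `π_i^m ≤ π_i^n`
for `i ≤ n`, so some optimal plan from `π^m` to `π^n` keeps `π_i^m` at `i` for every `i ≤ n`.
Since `π^{n+1}` is `π^n` scaled by `1 - α_{n+1}` plus an atom `α_{n+1}` at `n + 1`, diverting a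
common fraction of every row `i > n` of such a plan to the new target `n + 1` gives a plan to
`π^{n+1}`. By induction on `m`, `d_{i-1,n} ≤ d_{i-1,j-1}` for `j ≤ n < i ≤ m`, so the diverted
mass only gets cheaper, and `d_{m,n+1} ≤ d_{m,n}`. -/

section Coupling

variable {ι : Type*} {s t u : Finset ι} {μ ν ρ : ι → ℝ} {c w w₁ w₂ : ι → ι → ℝ}

structure IsCoupling (s t : Finset ι) (μ ν : ι → ℝ) (w : ι → ι → ℝ) : Prop where
  nonneg : ∀ i ∈ s, ∀ j ∈ t, 0 ≤ w i j
  sum_row : ∀ i ∈ s, ∑ j ∈ t, w i j = μ i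
  sum_col : ∀ j ∈ t, ∑ i ∈ s, w i j = ν j

def transportCost (s t : Finset ι) (c w : ι → ι → ℝ) : ℝ :=
  ∑ i ∈ s, ∑ j ∈ t, w i j * c i j

theorem transportCost_diagonal [DecidableEq ι] :
    transportCost s s c (fun i j => if i = j then μ i else 0) = ∑ i ∈ s, μ i * c i i := by
  simp [transportCost, ite_mul]

theorem transportCost_add_rankOne (a b : ι → ℝ) :
    transportCost s t c (fun i j => w i j + a i * b j)
      = transportCost s t c w + ∑ i ∈ s, ∑ j ∈ t, a i * b j * c i j := by
  simp only [transportCost, add_mul, sum_add_distrib]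

noncomputable def gluePlan (t : Finset ι) (ν : ι → ℝ) (w₁ w₂ : ι → ι → ℝ) (i j : ι) : ℝ :=
  ∑ k ∈ t, w₁ i k * w₂ k j / ν k

namespace IsCoupling

theorem transportCost_nonneg (hw : IsCoupling s t μ ν w) (hc : ∀ i ∈ s, ∀ j ∈ t, 0 ≤ c i j) :
    0 ≤ transportCost s t c w :=
  sum_nonneg fun i hi => sum_nonneg fun j hj => mul_nonneg (hw.nonneg i hi j hj) (hc i hi j hj)

theorem transportCost_le_sum (hw : IsCoupling s t μ ν w) (hc : ∀ i ∈ s, ∀ j ∈ t, c i j ≤ 1) :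
    transportCost s t c w ≤ ∑ i ∈ s, μ i := by
  refine sum_le_sum fun i hi => ?_
  rw [← hw.sum_row i hi]
  exact sum_le_sum fun j hj => mul_le_of_le_one_right (hw.nonneg i hi j hj) (hc i hi j hj)

theorem diagonal [DecidableEq ι] (hμ : ∀ i ∈ s, 0 ≤ μ i) :
    IsCoupling s s μ μ (fun i j => if i = j then μ i else 0) where
  nonneg i hi j _ := by split_ifs <;> simp [hμ i hi]
  sum_row i hi := by simp [hi]
  sum_col j hj := by simp [hj]

theorem add_rankOne (hw : IsCoupling s t μ ν w) {a b : ι → ℝ} (ha : ∑ i ∈ s, a i = 0)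
    (hb : ∑ j ∈ t, b j = 0) (hnonneg : ∀ i ∈ s, ∀ j ∈ t, 0 ≤ w i j + a i * b j) :
    IsCoupling s t μ ν (fun i j => w i j + a i * b j) where
  nonneg := hnonneg
  sum_row i hi := by rw [sum_add_distrib, ← mul_sum, hb, mul_zero, add_zero, hw.sum_row i hi]
  sum_col j hj := by rw [sum_add_distrib, ← sum_mul, ha, zero_mul, add_zero, hw.sum_col j hj]

theorem sum_col_of_offDiag_eq_zero (hw : IsCoupling s t μ ν w) {P : Finset ι} (hPs : P ⊆ s)
    (hP : ∀ i ∈ P, ∀ j ∈ t, j ≠ i → w i j = 0) {j : ι} (hjP : j ∈ P) (hjt : j ∈ t) :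
    ∑ i ∈ P, w i j = μ j := by
  rw [sum_eq_single_of_mem j hjP fun i hi hij => hP i hi j hjt hij.symm, ← hw.sum_row j (hPs hjP),
    sum_eq_single_of_mem j hjt fun k hk hkj => hP j hjP k hk hkj]

theorem sum_glue_summand_right (h₂ : IsCoupling t u ν ρ w₂) (hν : ∀ k ∈ t, 0 < ν k) {i k : ι}
    (hk : k ∈ t) : ∑ j ∈ u, w₁ i k * w₂ k j / ν k = w₁ i k := by
  rw [← sum_div, ← mul_sum, h₂.sum_row k hk, mul_div_cancel_right₀ _ (hν k hk).ne']

theorem sum_glue_summand_left (h₁ : IsCoupling s t μ ν w₁) (hν : ∀ k ∈ t, 0 < ν k) {k j : ι}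
    (hk : k ∈ t) : ∑ i ∈ s, w₁ i k * w₂ k j / ν k = w₂ k j := by
  rw [← sum_div, ← sum_mul, h₁.sum_col k hk, mul_div_cancel_left₀ _ (hν k hk).ne']

theorem glue (h₁ : IsCoupling s t μ ν w₁) (h₂ : IsCoupling t u ν ρ w₂) (hν : ∀ k ∈ t, 0 < ν k) :
    IsCoupling s u μ ρ (gluePlan t ν w₁ w₂) where
  nonneg i hi j hj := sum_nonneg fun k hk =>
    div_nonneg (mul_nonneg (h₁.nonneg i hi k hk) (h₂.nonneg k hk j hj)) (hν k hk).le
  sum_row i hi := by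
    simp only [gluePlan]
    rw [← h₁.sum_row i hi, sum_comm]
    exact sum_congr rfl fun k hk => h₂.sum_glue_summand_right hν hk
  sum_col j hj := by
    simp only [gluePlan]
    rw [← h₂.sum_col j hj, sum_comm]
    exact sum_congr rfl fun k hk => h₁.sum_glue_summand_left hν hk

theorem transportCost_glue_le (h₁ : IsCoupling s t μ ν w₁) (h₂ : IsCoupling t u ν ρ w₂)
    (hν : ∀ k ∈ t, 0 < ν k) (hc : ∀ i ∈ s, ∀ k ∈ t, ∀ j ∈ u, c i j ≤ c i k + c k j) :
    transportCost s u c (gluePlan t ν w₁ w₂) ≤ transportCost s t c w₁ + transportCost t u c w₂ := by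
  set g : ι → ι → ι → ℝ := fun i k j => w₁ i k * w₂ k j / ν k
  calc transportCost s u c (gluePlan t ν w₁ w₂)
      = ∑ i ∈ s, ∑ j ∈ u, ∑ k ∈ t, g i k j * c i j := by
        simp only [transportCost, gluePlan, sum_mul, g]
    _ ≤ ∑ i ∈ s, ∑ j ∈ u, ∑ k ∈ t, (g i k j * c i k + g i k j * c k j) := by
        gcongr with i hi j hj k hk
        rw [← mul_add]
        exact mul_le_mul_of_nonneg_left (hc i hi k hk j hj)
          (div_nonneg (mul_nonneg (h₁.nonneg i hi k hk) (h₂.nonneg k hk j hj)) (hν k hk).le)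
    _ = ∑ i ∈ s, ∑ k ∈ t, (∑ j ∈ u, g i k j) * c i k
          + ∑ k ∈ t, ∑ j ∈ u, (∑ i ∈ s, g i k j) * c k j := by
        simp only [sum_add_distrib, sum_mul]
        congr 1
        · exact sum_congr rfl fun i _ => sum_comm
        · rw [sum_comm, sum_congr rfl fun j _ => sum_comm, sum_comm]
    _ = transportCost s t c w₁ + transportCost t u c w₂ := by
        simp only [g, transportCost]
        congr 1
        · exact sum_congr rfl fun i _ => sum_congr rfl fun k hk => by
            rw [h₂.sum_glue_summand_right hν hk]
        · exact sum_congr rfl fun k hk => sum_congr rfl fun j _ => by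
            rw [h₁.sum_glue_summand_left hν hk]

end IsCoupling

end Coupling

section Rerouting

variable {ι : Type*} [DecidableEq ι] {s t : Finset ι} {μ ν : ι → ℝ} {c w : ι → ι → ℝ}

theorem sum_sum_mul_mul_nonpos {a b : ι → ℝ} {r : ι} (ha : ∑ i ∈ s, a i = 0)
    (hb : ∑ j ∈ t, b j = 0) (ha' : ∀ i ∈ s, i ≠ r → 0 ≤ a i) (hb' : ∀ j ∈ t, j ≠ r → 0 ≤ b j)
    (hcr : c r r = 0) (hc : ∀ i ∈ s, ∀ j ∈ t, c i j ≤ c i r + c r j) :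
    ∑ i ∈ s, ∑ j ∈ t, a i * b j * c i j ≤ 0 :=
  calc ∑ i ∈ s, ∑ j ∈ t, a i * b j * c i j
      ≤ ∑ i ∈ s, ∑ j ∈ t, a i * b j * (c i r + c r j) := by
        refine sum_le_sum fun i hi => sum_le_sum fun j hj => ?_
        by_cases hir : i = r
        · simp [hir, hcr]
        by_cases hjr : j = r
        · simp [hjr, hcr]
        exact mul_le_mul_of_nonneg_left (hc i hi j hj) (mul_nonneg (ha' i hi hir) (hb' j hj hjr))
    _ = (∑ i ∈ s, a i * c i r) * ∑ j ∈ t, b j + (∑ i ∈ s, a i) * ∑ j ∈ t, b j * c r j := by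
        simp only [sum_mul_sum, ← sum_add_distrib]
        exact sum_congr rfl fun i _ => sum_congr rfl fun j _ => by ring
    _ = 0 := by rw [ha, hb]; ring

namespace IsCoupling

theorem sum_erase_row_le_sum_erase_col (hw : IsCoupling s t μ ν w) {r : ι} (hrs : r ∈ s)
    (hrt : r ∈ t) (hμν : μ r ≤ ν r) : ∑ j ∈ t.erase r, w r j ≤ ∑ i ∈ s.erase r, w i r := by
  rw [sum_erase_eq_sub hrt, sum_erase_eq_sub hrs, hw.sum_row r hrs, hw.sum_col r hrt]
  linarith

/- The off-diagonal mass `E` of row `r` is kept at `r` instead, and the same amount of the mass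
entering column `r` is rerouted, proportionally, to the old destinations of row `r`: a rank-one
update `a ⊗ b` with zero marginals, paid for by the triangle inequality through `r`. -/
theorem exists_cost_le_offDiag_row_eq_zero_of_pos (hw : IsCoupling s t μ ν w) {r : ι}
    (hrs : r ∈ s) (hrt : r ∈ t) (hμν : μ r ≤ ν r) (hRpos : 0 < ∑ i ∈ s.erase r, w i r)
    (hcr : c r r = 0) (hc : ∀ i ∈ s, ∀ j ∈ t, c i j ≤ c i r + c r j) :
    ∃ w', IsCoupling s t μ ν w' ∧ transportCost s t c w' ≤ transportCost s t c w ∧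
      (∀ j ∈ t, j ≠ r → w' r j = 0) ∧ ∀ i ∈ s, i ≠ r → w i r = 0 → ∀ j ∈ t, w' i j = w i j := by
  set E := ∑ j ∈ t.erase r, w r j with hE
  set R := ∑ i ∈ s.erase r, w i r with hR
  have hE0 : 0 ≤ E := sum_nonneg fun j hj => hw.nonneg r hrs j (mem_of_mem_erase hj)
  have hER : E ≤ R := hw.sum_erase_row_le_sum_erase_col hrs hrt hμν
  set a : ι → ℝ := fun i => if i = r then -1 else w i r / R
  set b : ι → ℝ := fun j => if j = r then -E else w r j
  have ha : ∑ i ∈ s, a i = 0 := by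
    rw [← add_sum_erase s a hrs, sum_congr rfl fun i hi => if_neg (ne_of_mem_erase hi), ← sum_div,
      ← hR, div_self hRpos.ne']
    simp [a]
  have hb : ∑ j ∈ t, b j = 0 := by
    rw [← add_sum_erase t b hrt, sum_congr rfl fun j hj => if_neg (ne_of_mem_erase hj)]
    simp [b, hE]
  have hnonneg : ∀ i ∈ s, ∀ j ∈ t, 0 ≤ w i j + a i * b j := by
    intro i hi j hj
    have hwij := hw.nonneg i hi j hj
    have hwir := hw.nonneg i hi r hrt
    have hwrj := hw.nonneg r hrs j hj
    have hER' : w i r / R * E ≤ w i r := by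
      rw [div_mul_eq_mul_div, div_le_iff₀ hRpos]
      exact mul_le_mul_of_nonneg_left hER hwir
    by_cases hir : i = r <;> by_cases hjr : j = r
    · simp [a, b, hir, hjr] at hwij ⊢; linarith
    · simp [a, b, hir, hjr]
    · simp [a, b, hir, hjr]; linarith
    · simp only [a, b, hir, hjr, if_false]; positivity
  refine ⟨_, hw.add_rankOne ha hb hnonneg, ?_, fun j _ hjr => by simp [a, b, hjr],
    fun i _ hir hwir j _ => by simp [a, hir, hwir]⟩
  rw [transportCost_add_rankOne, add_le_iff_nonpos_right]
  refine sum_sum_mul_mul_nonpos ha hb (fun i hi hir => ?_) (fun j hj hjr => ?_) hcr hc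
  · simpa [a, hir] using div_nonneg (hw.nonneg i hi r hrt) hRpos.le
  · simpa [b, hjr] using hw.nonneg r hrs j hj

theorem exists_cost_le_offDiag_row_eq_zero (hw : IsCoupling s t μ ν w) {r : ι} (hrs : r ∈ s)
    (hrt : r ∈ t) (hμν : μ r ≤ ν r) (hcr : c r r = 0)
    (hc : ∀ i ∈ s, ∀ j ∈ t, c i j ≤ c i r + c r j) :
    ∃ w', IsCoupling s t μ ν w' ∧ transportCost s t c w' ≤ transportCost s t c w ∧
      (∀ j ∈ t, j ≠ r → w' r j = 0) ∧ ∀ i ∈ s, i ≠ r → w i r = 0 → ∀ j ∈ t, w' i j = w i j := by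
  have hER := hw.sum_erase_row_le_sum_erase_col hrs hrt hμν
  have hnonneg : ∀ j ∈ t.erase r, 0 ≤ w r j := fun j hj => hw.nonneg r hrs j (mem_of_mem_erase hj)
  rcases ((sum_nonneg hnonneg).trans hER).eq_or_lt with hR0 | hRpos
  · refine ⟨w, hw, le_rfl, fun j hj hjr => ?_, fun _ _ _ _ _ _ => rfl⟩
    exact (sum_eq_zero_iff_of_nonneg hnonneg).1 ((hER.trans hR0.ge).antisymm (sum_nonneg hnonneg))
      j (mem_erase.2 ⟨hjr, hj⟩)
  · exact hw.exists_cost_le_offDiag_row_eq_zero_of_pos hrs hrt hμν hRpos hcr hc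

theorem exists_cost_le_offDiag_rows_eq_zero (hw : IsCoupling s t μ ν w) {P : Finset ι}
    (hPs : P ⊆ s) (hPt : P ⊆ t) (hμν : ∀ r ∈ P, μ r ≤ ν r) (hcr : ∀ r ∈ P, c r r = 0)
    (hc : ∀ i ∈ s, ∀ r ∈ P, ∀ j ∈ t, c i j ≤ c i r + c r j) :
    ∃ w', IsCoupling s t μ ν w' ∧ transportCost s t c w' ≤ transportCost s t c w ∧
      ∀ i ∈ P, ∀ j ∈ t, j ≠ i → w' i j = 0 := by
  induction P using Finset.induction_on with
  | empty => exact ⟨w, hw, le_rfl, by simp⟩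
  | insert r P hrP ih =>
    obtain ⟨w₁, hw₁, hcost₁, hdiag₁⟩ := ih ((subset_insert r P).trans hPs)
      ((subset_insert r P).trans hPt) (fun r' hr' => hμν r' (mem_insert_of_mem hr'))
      (fun r' hr' => hcr r' (mem_insert_of_mem hr'))
      (fun i hi r' hr' => hc i hi r' (mem_insert_of_mem hr'))
    have hrs := hPs (mem_insert_self r P)
    have hrt := hPt (mem_insert_self r P)
    obtain ⟨w₂, hw₂, hcost₂, hrow, hkeep⟩ := hw₁.exists_cost_le_offDiag_row_eq_zero hrs hrt
      (hμν r (mem_insert_self r P)) (hcr r (mem_insert_self r P))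
      (fun i hi => hc i hi r (mem_insert_self r P))
    refine ⟨w₂, hw₂, hcost₂.trans hcost₁, fun i hi j hj hji => ?_⟩
    rcases mem_insert.1 hi with rfl | hiP
    · exact hrow j hj hji
    · have hir : i ≠ r := fun h => hrP (h ▸ hiP)
      rw [hkeep i (hPs (mem_insert_of_mem hiP)) hir (hdiag₁ i hiP r hrt hir.symm) j hj]
      exact hdiag₁ i hiP j hj hji

end IsCoupling

end Rerouting

section Divert
variable {ι : Type*} [DecidableEq ι] {s t : Finset ι} {μ ν : ι → ℝ} {c w : ι → ι → ℝ}

noncomputable def divertPlan (p : ι) (θ μ : ι → ℝ) (w : ι → ι → ℝ) (i j : ι) : ℝ :=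
  if j = p then θ i * μ i else (1 - θ i) * w i j

namespace IsCoupling

variable {p : ι} {θ ν' : ι → ℝ}

theorem divert (hw : IsCoupling s t μ ν w) (hp : p ∉ t) (hθ : ∀ i ∈ s, θ i ∈ Set.Icc 0 1)
    (hμ : ∀ i ∈ s, 0 ≤ μ i) (hν' : ∀ j ∈ t, ∑ i ∈ s, (1 - θ i) * w i j = ν' j)
    (hν'p : ∑ i ∈ s, θ i * μ i = ν' p) :
    IsCoupling s (insert p t) μ ν' (divertPlan p θ μ w) where
  nonneg i hi j _ := by
    unfold divertPlan
    have := hθ i hi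
    split_ifs
    · exact mul_nonneg this.1 (hμ i hi)
    · exact mul_nonneg (sub_nonneg.2 this.2) (hw.nonneg i hi j (mem_of_mem_insert_of_ne ‹_› ‹_›))
  sum_row i hi := by
    simp only [divertPlan, sum_insert hp, if_true]
    rw [sum_congr rfl fun j hj => if_neg (ne_of_mem_of_not_mem hj hp), ← mul_sum, hw.sum_row i hi]
    ring
  sum_col j hj := by
    rcases mem_insert.1 hj with rfl | hjt
    · simpa [divertPlan] using hν'p
    · simpa [divertPlan, ne_of_mem_of_not_mem hjt hp] using hν' j hjt

theorem transportCost_divertPlan_le (hw : IsCoupling s t μ ν w) (hp : p ∉ t)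
    (hθ : ∀ i ∈ s, 0 ≤ θ i) (hc : ∀ i ∈ s, θ i ≠ 0 → ∀ j ∈ t, c i p ≤ c i j) :
    transportCost s (insert p t) c (divertPlan p θ μ w) ≤ transportCost s t c w := by
  refine sum_le_sum fun i hi => ?_
  simp only [divertPlan, sum_insert hp, if_true]
  rw [sum_congr rfl fun j hj => by rw [if_neg (ne_of_mem_of_not_mem hj hp)], ← hw.sum_row i hi,
    mul_sum, sum_mul, ← sum_add_distrib]
  refine sum_le_sum fun j hj => ?_
  rcases eq_or_ne (θ i) 0 with hθi | hθi
  · simp [hθi]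
  · nlinarith [mul_le_mul_of_nonneg_left (hc i hi hθi j hj)
      (mul_nonneg (hθ i hi) (hw.nonneg i hi j hj))]

end IsCoupling

end Divert

section KMWeights
variable {α : ℕ → ℝ}

theorem kmPi_self (α : ℕ → ℝ) (n : ℕ) : kmPi α n n = α n := by simp [kmPi]

theorem kmPi_eq_mul_prod {i q m : ℕ} (hiq : i ≤ q) (hqm : q ≤ m) :
    kmPi α i m = kmPi α i q * ∏ k ∈ Ioc q m, (1 - α k) := by
  simp only [kmPi, Icc_add_one_left_eq_Ioc, mul_assoc, prod_Ioc_consecutive _ hiq hqm]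

theorem kmPi_succ {i n : ℕ} (h : i ≤ n) : kmPi α i (n + 1) = kmPi α i n * (1 - α (n + 1)) := by
  rw [kmPi_eq_mul_prod h n.le_succ, Nat.Ioc_succ_singleton, prod_singleton]

theorem sum_kmPi (hα0 : α 0 = 1) (n : ℕ) : ∑ i ∈ range (n + 1), kmPi α i n = 1 := by
  induction n with
  | zero => simp [kmPi, hα0]
  | succ n ih =>
    rw [sum_range_succ, sum_congr rfl fun i hi => kmPi_succ (mem_range_succ_iff.1 hi), ← sum_mul,
      ih, kmPi_self]
    ring

theorem kmPi_pos (hα0 : α 0 = 1) (hα : ∀ n, 1 ≤ n → α n ∈ Set.Ioo (0 : ℝ) 1) (i n : ℕ) :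
    0 < kmPi α i n := by
  refine mul_pos ?_ (prod_pos fun k hk => sub_pos.2 (hα k ?_).2)
  · rcases i with _ | i
    · simp [hα0]
    · exact (hα _ i.succ_pos).1
  · linarith [(mem_Icc.1 hk).1]

theorem prod_Ioc_one_sub_le (hα : ∀ n, 1 ≤ n → α n ∈ Set.Ioo (0 : ℝ) 1) {q m : ℕ} (hqm : q < m) :
    ∏ k ∈ Ioc q m, (1 - α k) ≤ 1 - α (q + 1) := by
  rw [← Icc_add_one_left_eq_Ioc, Icc_eq_cons_Ioc hqm, prod_cons]
  have hq := hα (q + 1) q.succ_pos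
  refine mul_le_of_le_one_right (by linarith [hq.2]) (prod_le_one (fun k hk => ?_) fun k hk => ?_)
  all_goals have := hα k (by linarith [(mem_Ioc.1 hk).1]); linarith [this.1, this.2]

theorem kmPi_le_kmPi (hα0 : α 0 = 1) (hα : ∀ n, 1 ≤ n → α n ∈ Set.Ioo (0 : ℝ) 1)
    {r q m : ℕ} (hrq : r ≤ q) (hqm : q < m) : kmPi α r m ≤ kmPi α r q := by
  rw [kmPi_eq_mul_prod hrq hqm.le]
  exact mul_le_of_le_one_right (kmPi_pos hα0 hα r q).le
    ((prod_Ioc_one_sub_le hα hqm).trans (by linarith [(hα (q + 1) q.succ_pos).1]))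

theorem isPlan_iff_isCoupling {m n : ℕ} {z : ℕ → ℕ → ℝ} :
    IsPlan α m n z ↔
      IsCoupling (range (m + 1)) (range (n + 1)) (kmPi α · m) (kmPi α · n) z := by
  refine ⟨fun ⟨h₁, h₂, h₃⟩ => ⟨?_, ?_, ?_⟩, fun ⟨h₁, h₂, h₃⟩ => ⟨?_, ?_, ?_⟩⟩ <;>
    simp only [mem_range_succ_iff] at * <;> assumption

end KMWeights

namespace IsKMDist
variable {α : ℕ → ℝ} {D : ℕ → ℕ → ℝ}

theorem le_planCost (hD : IsKMDist α D) {m n : ℕ} {z : ℕ → ℕ → ℝ} (hz : IsPlan α m n z) :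
    D (m + 1) (n + 1) ≤ planCost D m n z :=
  (hD.2.2.2 m n).2 ⟨z, hz, rfl⟩

theorem exists_isPlan (hD : IsKMDist α D) (m n : ℕ) :
    ∃ z, IsPlan α m n z ∧ planCost D m n z = D (m + 1) (n + 1) :=
  let ⟨z, hz, hcost⟩ := (hD.2.2.2 m n).1
  ⟨z, hz, hcost.symm⟩

theorem nonneg (hD : IsKMDist α D) (M N : ℕ) : 0 ≤ D M N := by
  induction M using Nat.strong_induction_on generalizing N with
  | _ M ih =>
  rcases M with _ | a <;> rcases N with _ | b
  · exact hD.1.ge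
  · exact (hD.2.1 b).symm ▸ zero_le_one
  · exact (hD.2.2.1 a).symm ▸ zero_le_one
  · obtain ⟨z, hz, hcost⟩ := hD.exists_isPlan a b
    exact hcost ▸ (isPlan_iff_isCoupling.1 hz).transportCost_nonneg
      fun i hi j _ => ih i (mem_range.1 hi) j

theorem le_one (hD : IsKMDist α D) (hα0 : α 0 = 1) (M N : ℕ) : D M N ≤ 1 := by
  induction M using Nat.strong_induction_on generalizing N with
  | _ M ih =>
  rcases M with _ | a <;> rcases N with _ | b
  · exact hD.1 ▸ zero_le_one
  · exact (hD.2.1 b).le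
  · exact (hD.2.2.1 a).le
  · obtain ⟨z, hz, hcost⟩ := hD.exists_isPlan a b
    rw [← hcost, ← sum_kmPi hα0 a]
    exact (isPlan_iff_isCoupling.1 hz).transportCost_le_sum fun i hi j _ => ih i (mem_range.1 hi) j

theorem apply_self (hD : IsKMDist α D) (hα0 : α 0 = 1)
    (hα : ∀ n, 1 ≤ n → α n ∈ Set.Ioo (0 : ℝ) 1) (k : ℕ) : D k k = 0 := by
  induction k using Nat.strong_induction_on with
  | _ k ih =>
  rcases k with _ | t
  · exact hD.1
  have hdiag := IsCoupling.diagonal (s := range (t + 1)) fun i _ => (kmPi_pos hα0 hα i t).le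
  refine le_antisymm ?_ (hD.nonneg _ _)
  calc D (t + 1) (t + 1) ≤ planCost D t t _ := hD.le_planCost (isPlan_iff_isCoupling.2 hdiag)
    _ = ∑ i ∈ range (t + 1), kmPi α i t * D i i := transportCost_diagonal
    _ = 0 := sum_eq_zero fun i hi => by rw [ih i (mem_range.1 hi), mul_zero]

theorem triangle (hD : IsKMDist α D) (hα0 : α 0 = 1)
    (hα : ∀ n, 1 ≤ n → α n ∈ Set.Ioo (0 : ℝ) 1) (A E B : ℕ) : D A B ≤ D A E + D E B := by
  induction A using Nat.strong_induction_on generalizing E B with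
  | _ A ih =>
  have ⟨h00, h0s, hs0, _⟩ := hD
  rcases A with _ | a <;> rcases E with _ | e <;> rcases B with _ | b
  · simp [h00]
  · simp [h00, h0s]
  · norm_num [h00, h0s, hs0]
  · simpa [h0s] using hD.nonneg (e + 1) (b + 1)
  · simp [h00, hs0]
  · rw [hs0, h0s]; linarith [hD.le_one hα0 (a + 1) (b + 1)]
  · simpa [hs0] using hD.nonneg (a + 1) (e + 1)
  obtain ⟨z₁, hz₁, hcost₁⟩ := hD.exists_isPlan a e
  obtain ⟨z₂, hz₂, hcost₂⟩ := hD.exists_isPlan e b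
  have h₁ := isPlan_iff_isCoupling.1 hz₁
  have h₂ := isPlan_iff_isCoupling.1 hz₂
  have hν : ∀ k ∈ range (e + 1), 0 < kmPi α k e := fun k _ => kmPi_pos hα0 hα k e
  rw [← hcost₁, ← hcost₂]
  exact (hD.le_planCost (isPlan_iff_isCoupling.2 (h₁.glue h₂ hν))).trans
    (h₁.transportCost_glue_le h₂ hν fun i hi k _ j _ => ih i (mem_range.1 hi) k j)

end IsKMDist

section KMStep

variable {α : ℕ → ℝ} {D : ℕ → ℕ → ℝ}

theorem sum_range_ite_le_zero_mul (τ : ℝ) (f : ℕ → ℝ) {q m : ℕ} (hqm : q ≤ m) :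
    ∑ i ∈ range (m + 1), (if i ≤ q then 0 else τ) * f i
      = τ * (∑ i ∈ range (m + 1), f i - ∑ i ∈ range (q + 1), f i) := by
  rw [← sum_range_add_sum_Ico _ (by omega : q + 1 ≤ m + 1),
    ← sum_range_add_sum_Ico f (by omega : q + 1 ≤ m + 1), add_sub_cancel_left, mul_sum,
    sum_eq_zero fun i hi => by simp [mem_range_succ_iff.1 hi], zero_add]
  exact sum_congr rfl fun i hi => by simp [Nat.not_le.2 (mem_Ico.1 hi).1]

theorem exists_isPlan_succ_cost_le (hα0 : α 0 = 1) (hα : ∀ n, 1 ≤ n → α n ∈ Set.Ioo (0 : ℝ) 1)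
    {m q : ℕ} (hqm : q < m) {w : ℕ → ℕ → ℝ} (hw : IsPlan α m q w)
    (hdiag : ∀ i ∈ range (q + 1), ∀ j ∈ range (q + 1), j ≠ i → w i j = 0)
    (hmono : ∀ i ∈ range (m + 1), q < i → ∀ j ∈ range (q + 1), D i (q + 1) ≤ D i j) :
    ∃ z, IsPlan α m (q + 1) z ∧ planCost D m (q + 1) z ≤ planCost D m q w := by
  have hw' := isPlan_iff_isCoupling.1 hw
  set β := ∏ k ∈ Ioc q m, (1 - α k)
  have hβ := prod_Ioc_one_sub_le hα hqm
  have hαq := hα (q + 1) q.succ_pos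
  -- the rows `i > q` carry mass `1 - β`; diverting the fraction `τ` of each sends `α (q + 1)`
  set τ := α (q + 1) / (1 - β)
  have hτβ : τ * (1 - β) = α (q + 1) := div_mul_cancel₀ _ (by linarith [hαq.1])
  have hτ0 : 0 ≤ τ := div_nonneg hαq.1.le (by linarith [hαq.1])
  have hτ1 : τ ≤ 1 := div_le_one_of_le₀ (by linarith) (by linarith [hαq.1])
  set θ : ℕ → ℝ := fun i => if i ≤ q then 0 else τ
  have hθ : ∀ i ∈ range (m + 1), θ i ∈ Set.Icc 0 1 := fun i _ => by
    simp only [θ]; split_ifs <;> simp [hτ0, hτ1]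
  have hcol : ∀ j ∈ range (q + 1),
      ∑ i ∈ range (m + 1), (1 - θ i) * w i j = kmPi α j (q + 1) := fun j hj => by
    simp only [sub_mul, one_mul, sum_sub_distrib, θ]
    rw [sum_range_ite_le_zero_mul τ _ hqm.le, hw'.sum_col j hj,
      hw'.sum_col_of_offDiag_eq_zero (range_subset_range.2 (by omega)) hdiag hj hj,
      kmPi_succ (mem_range_succ_iff.1 hj), kmPi_eq_mul_prod (mem_range_succ_iff.1 hj) hqm.le]
    linear_combination (-kmPi α j q) * hτβ
  have hnew : ∑ i ∈ range (m + 1), θ i * kmPi α i m = kmPi α (q + 1) (q + 1) := by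
    have hlowsum : ∑ i ∈ range (q + 1), kmPi α i m = β := by
      rw [sum_congr rfl fun i hi => kmPi_eq_mul_prod (mem_range_succ_iff.1 hi) hqm.le, ← sum_mul,
        sum_kmPi hα0, one_mul]
    rw [sum_range_ite_le_zero_mul τ _ hqm.le, sum_kmPi hα0, hlowsum, hτβ, kmPi_self]
  have hz := hw'.divert (p := q + 1) (by simp) hθ (fun i _ => (kmPi_pos hα0 hα i m).le) hcol hnew
  have hcost := hw'.transportCost_divertPlan_le (c := D) (by simp) (fun i hi => (hθ i hi).1)
    fun i hi hθi j hj => hmono i hi (Nat.lt_of_not_le fun hiq => hθi (if_pos hiq)) j hj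
  rw [← range_add_one] at hz hcost
  exact ⟨_, isPlan_iff_isCoupling.2 hz, hcost⟩

theorem IsKMDist.antitoneOn (hD : IsKMDist α D) (hα0 : α 0 = 1)
    (hα : ∀ n, 1 ≤ n → α n ∈ Set.Ioo (0 : ℝ) 1) (m : ℕ) :
    AntitoneOn (D (m + 1)) (Set.Iic (m + 1)) := by
  induction m using Nat.strong_induction_on with
  | _ m ih =>
  refine antitoneOn_of_succ_le Set.ordConnected_Iic fun n _ _ hn => ?_
  simp only [Order.succ_eq_add_one, Set.mem_Iic] at hn ⊢
  rcases n with _ | q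
  · exact hD.2.2.1 m ▸ hD.le_one hα0 _ _
  have hqm : q < m := by omega
  obtain ⟨w₀, hw₀, hcost₀⟩ := hD.exists_isPlan m q
  obtain ⟨w, hw, hcost, hdiag⟩ :=
    (isPlan_iff_isCoupling.1 hw₀).exists_cost_le_offDiag_rows_eq_zero (c := D)
      (range_subset_range.2 (by omega)) subset_rfl
      (fun r hr => kmPi_le_kmPi hα0 hα (mem_range_succ_iff.1 hr) hqm)
      (fun r _ => hD.apply_self hα0 hα r) fun i _ r _ j _ => hD.triangle hα0 hα i r j
  obtain ⟨z, hz, hzcost⟩ := exists_isPlan_succ_cost_le hα0 hα hqm (isPlan_iff_isCoupling.2 hw)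
    hdiag fun i hi hqi j hj => by
      obtain ⟨a, rfl⟩ : ∃ a, i = a + 1 := ⟨i - 1, by omega⟩
      have := mem_range.1 hi
      have := mem_range.1 hj
      exact ih a (by omega) (by simp; omega) (by simp; omega) (by omega)
  calc D (m + 1) (q + 1 + 1) ≤ planCost D m (q + 1) z := hD.le_planCost hz
    _ ≤ planCost D m q w₀ := hzcost.trans hcost
    _ = D (m + 1) (q + 1) := hcost₀

end KMStep

/-- for fixed `m`, `n ↦ d_{mn}` is nonincreasing for `n ≤ m`,
i.e. `d_{mn} ≤ d_{m,n-1}` for `0 ≤ n ≤ m` (shifted: `D (m+1) n = d_{m,n-1}`). -/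
theorem km_dist_antitone_left (α : ℕ → ℝ) (hα0 : α 0 = 1)
    (hα : ∀ n, 1 ≤ n → α n ∈ Set.Ioo (0 : ℝ) 1)
    (D : ℕ → ℕ → ℝ) (hD : IsKMDist α D) :
    ∀ m n : ℕ, n ≤ m → D (m + 1) (n + 1) ≤ D (m + 1) n :=
  fun m n hn => hD.antitoneOn hα0 hα m (by simp; omega) (by simp; omega) n.le_succ
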